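/- There exists an absolute constant C > 0 such that for every real t ≥ 1, every nonzero integer k, all integers l, l', and all real numbers η, ξ the following holds: if it is NOT the case that (t ∈ 𝐈_{k,η} and t ∈ 𝐈_{k,ξ} and |l| < |η|/5 and |l'| < |ξ|/5), then 1/(|k| + |η − k·t| + |l|) + 1/(|k| + |ξ − k·t| + |l'|) ≤ C · ⟨η − ξ, l − l'⟩ / ⟨k, t, l'⟩. -/
import Mathlib


/-- The critical times: `t_{j,η} = |η|/(j+1) + |η|/(2j(j+1))` for `j ≥ 1`, and
`t_{0,η} = 2|η|`. -/
noncomputable def tcrit (j : ℕ) (η : ℝ) : ℝ :=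
  if j = 0 then 2 * |η|
  else |η| / ((j : ℝ) + 1) + |η| / (2 * (j : ℝ) * ((j : ℝ) + 1))

/-- The critical interval `I_{k,η} = [t_{|k|,η}, t_{|k|-1,η}]` when `kη > 0` and
`1 ≤ |k| ≤ ⌊√|η|⌋`, and `∅` otherwise. -/
noncomputable def Icrit (k : ℤ) (η : ℝ) : Set ℝ :=
  if 0 < (k : ℝ) * η ∧ 1 ≤ k.natAbs ∧ (k.natAbs : ℤ) ≤ ⌊Real.sqrt |η|⌋ then
    Set.Icc (tcrit k.natAbs η) (tcrit (k.natAbs - 1) η)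
  else ∅

/-- The resonant interval `𝐈_{k,η}`, which is `I_{k,η}` if `2√|η| ≤ t_{|k|,η}` and `∅`
otherwise. -/
noncomputable def IcritRes (k : ℤ) (η : ℝ) : Set ℝ :=
  if 2 * Real.sqrt |η| ≤ tcrit k.natAbs η then Icrit k η else ∅

/-- The two-variable Japanese bracket `⟨a,b⟩ = (1 + (|a| + |b|)²)^{1/2}`. -/
noncomputable def jb2 (a b : ℝ) : ℝ := Real.sqrt (1 + (|a| + |b|) ^ 2)

/-- The three-variable Japanese bracket `⟨a,b,c⟩ = (1 + (|a| + |b| + |c|)²)^{1/2}`. -/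
noncomputable def jb3 (a b c : ℝ) : ℝ := Real.sqrt (1 + (|a| + |b| + |c|) ^ 2)

set_option maxHeartbeats 1000000 in
lemma key_nr (t η : ℝ) (k l : ℤ) (ht : 1 ≤ t) (hk : k ≠ 0)
    (h : t ∉ IcritRes k η ∨ |η| / 5 ≤ |(l : ℝ)|) :
    t ≤ 16 * (|(k : ℝ)| + |η - (k : ℝ) * t| + |(l : ℝ)|) := by
  have ht0 : 0 < t := lt_of_lt_of_le one_pos ht
  have hK1 : (1 : ℝ) ≤ |(k : ℝ)| := by
    have : (1:ℤ) ≤ |k| := Int.one_le_abs hk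
    calc (1:ℝ) ≤ ((|k| : ℤ) : ℝ) := by exact_mod_cast this
    _ = |(k : ℝ)| := by push_cast; ring
  set K : ℝ := |(k : ℝ)| with hKdef
  have hKpos : 0 < K := lt_of_lt_of_le one_pos hK1
  have e2 : K ^ 2 = ((k:ℝ)) ^ 2 := by rw [hKdef]; exact sq_abs _
  have habs : 0 ≤ |η - (k:ℝ)*t| := abs_nonneg _
  have hl0 : 0 ≤ |(l:ℝ)| := abs_nonneg _
  have hη0 : 0 ≤ |η| := abs_nonneg _
  have hKt : K * t ≤ |η - (k:ℝ)*t| + |η| := by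
    have h1 : |(k:ℝ)*t| = K * t := by rw [abs_mul, abs_of_pos ht0]
    have h2 : |(k:ℝ)*t| ≤ |η - (k:ℝ)*t| + |η| := by
      simpa [abs_sub_comm] using abs_sub_abs_le_abs_sub ((k:ℝ)*t) η |>.trans (le_abs_self _)
    linarith [h1 ▸ h2]
  rcases h with hmem | hl
  case inr => nlinarith [mul_le_mul_of_nonneg_right hK1 (le_of_lt ht0)]
  case inl =>
    set nK : ℕ := k.natAbs with hnKdef
    have hnK1 : 1 ≤ nK := Int.natAbs_pos.mpr hk
    have hnK0 : nK ≠ 0 := Nat.one_le_iff_ne_zero.mp hnK1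
    have hKK : (nK : ℝ) = K := by
      rw [hKdef, hnKdef, Nat.cast_natAbs, Int.cast_abs]
    have hsqrt0 : 0 ≤ Real.sqrt |η| := Real.sqrt_nonneg _
    have hsqsq : Real.sqrt |η| * Real.sqrt |η| = |η| := Real.mul_self_sqrt hη0
    by_cases hres : 2 * Real.sqrt |η| ≤ tcrit nK η
    · rw [IcritRes, if_pos hres] at hmem
      by_cases hcond : 0 < (k : ℝ) * η ∧ 1 ≤ k.natAbs ∧ (k.natAbs : ℤ) ≤ ⌊Real.sqrt |η|⌋
      · rw [Icrit, if_pos hcond] at hmem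
        obtain ⟨hsign, -, hfloor⟩ := hcond
        have hkη : (k:ℝ) * η = K * |η| := by
          rw [hKdef, ← abs_mul, abs_of_pos hsign]
        have hηk : |η - (k:ℝ)*t| = |(|η| - K * t)| := by
          rw [← sq_eq_sq_iff_abs_eq_abs]
          linear_combination (-1 : ℝ) * sq_abs η - t^2 * e2 - 2*t*hkη
        rw [Set.mem_Icc, not_and_or, not_le, not_le] at hmem
        rw [hηk]
        rcases hmem with hlt | hgt
        · -- t < tcrit nK η
          rw [tcrit, if_neg hnK0, hKK] at hlt
          rw [div_add_div _ _ (by linarith : K + 1 ≠ 0) (by positivity : 2*K*(K+1) ≠ 0),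
            lt_div_iff₀ (by positivity)] at hlt
          -- hlt : t * ((K+1) * (2*K*(K+1))) < |η|*(2*K*(K+1)) + |η|*(K+1)
          have hpos : 0 < |η| - K * t := by
            nlinarith [mul_pos hKpos (by linarith : (0:ℝ) < K + 1)]
          rw [abs_of_pos hpos]
          nlinarith [mul_pos hKpos (by linarith : (0:ℝ) < K + 1),
            mul_nonneg hη0 (by linarith : (0:ℝ) ≤ K - 1),
            mul_nonneg (mul_nonneg hη0 (by linarith : (0:ℝ) ≤ K - 1)) hKpos.le]
        · -- tcrit (nK - 1) η < t
          rcases Nat.lt_or_ge nK 2 with h2 | h2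
          · have hnKeq : nK = 1 := by omega
            have hm0 : nK - 1 = 0 := by omega
            rw [hm0, tcrit, if_pos rfl] at hgt
            have hKe : K = 1 := by rw [← hKK, hnKeq]; norm_num
            rw [hKe]
            have : |(|η| - 1 * t)| = t - |η| := by
              rw [abs_of_nonpos (by linarith)]; ring
            rw [this]
            linarith
          · have hnKm : nK - 1 ≠ 0 := by omega
            rw [tcrit, if_neg hnKm] at hgt
            have hcast : ((nK - 1 : ℕ) : ℝ) = K - 1 := by
              rw [Nat.cast_sub hnK1, hKK]; norm_num
            rw [hcast] at hgt
            have hK2 : (2:ℝ) ≤ K := by rw [← hKK]; exact_mod_cast h2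
            rw [div_add_div _ _ (by linarith : K - 1 + 1 ≠ 0)
              (by nlinarith : 2*(K-1)*(K-1+1) ≠ 0), div_lt_iff₀ (by nlinarith)] at hgt
            -- hgt : |η|*(2*(K-1)*(K-1+1)) + |η|*(K-1+1) < t * ((K-1+1)*(2*(K-1)*(K-1+1)))
            have hpos : 0 < K * t - |η| := by
              nlinarith [mul_pos hKpos (by linarith : (0:ℝ) < K - 1)]
            rw [abs_sub_comm, abs_of_pos hpos]
            nlinarith [mul_pos hKpos (by linarith : (0:ℝ) < K - 1),
              mul_nonneg hη0 (by linarith : (0:ℝ) ≤ K - 2),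
              mul_nonneg (mul_nonneg hη0 (by linarith : (0:ℝ) ≤ K - 2)) hKpos.le,
              mul_nonneg hη0 hKpos.le]
      · -- condition of Icrit fails
        rcases le_or_gt ((k:ℝ) * η) 0 with hle | hposkη
        · have h2 : K * t ≤ |η - (k:ℝ)*t| := by
            by_contra hcon
            push_neg at hcon
            have hsq : |η - (k:ℝ)*t| * |η - (k:ℝ)*t| < (K*t) * (K*t) :=
              mul_self_lt_mul_self habs hcon
            rw [abs_mul_abs_self] at hsq
            nlinarith [mul_nonneg (neg_nonneg.mpr hle) ht0.le, sq_nonneg η,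
              mul_le_mul_of_nonneg_right e2.le (sq_nonneg t),
              mul_le_mul_of_nonneg_right e2.ge (sq_nonneg t)]
          nlinarith
        · have hfl : ⌊Real.sqrt |η|⌋ < (nK:ℤ) := by
            by_contra hc
            push_neg at hc
            exact hcond ⟨hposkη, hnK1, hc⟩
          have hslt : Real.sqrt |η| < (nK:ℝ) := by
            have := Int.lt_floor_add_one (Real.sqrt |η|)
            have h3 : Real.sqrt |η| < ((⌊Real.sqrt |η|⌋ + 1 : ℤ) : ℝ) := by push_cast; linarith
            have h4 : ((⌊Real.sqrt |η|⌋ + 1 : ℤ) : ℝ) ≤ ((nK:ℤ):ℝ) := by exact_mod_cast hfl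
            calc Real.sqrt |η| < _ := h3
            _ ≤ _ := h4
            _ = (nK:ℝ) := by push_cast; ring
          rw [hKK] at hslt
          have h9 : |η| < K^2 := by nlinarith [hsqsq, hsqrt0]
          nlinarith [hKt, h9]
    · -- 2√|η| > tcrit nK η
      rw [tcrit, if_neg hnK0, hKK] at hres
      push_neg at hres
      have hterm2 : 0 ≤ |η| / (2 * K * (K + 1)) := by positivity
      have h7 : |η| / (K + 1) < 2 * Real.sqrt |η| := by linarith
      rw [div_lt_iff₀ (by linarith : (0:ℝ) < K + 1)] at h7
      have h8 : Real.sqrt |η| < 2 * (K + 1) := by nlinarith [hsqsq, hsqrt0]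
      have h9 : |η| < 16 * K^2 := by nlinarith [hsqsq, hsqrt0]
      nlinarith [hKt, h9]


lemma jb2_one_le (a b : ℝ) : 1 ≤ jb2 a b := by
  rw [jb2, show (1:ℝ) = Real.sqrt 1 by rw [Real.sqrt_one]]
  · apply Real.sqrt_le_sqrt
    nlinarith [sq_nonneg (|a| + |b|), Real.sqrt_one]
lemma jb2_ge (a b : ℝ) : |a| + |b| ≤ jb2 a b := by
  have h0 : 0 ≤ |a| + |b| := by positivity
  rw [jb2]
  calc |a| + |b| = Real.sqrt ((|a| + |b|)^2) := (Real.sqrt_sq h0).symm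
  _ ≤ _ := Real.sqrt_le_sqrt (by nlinarith)
lemma jb3_pos (a b c : ℝ) : 0 < jb3 a b c := by
  rw [jb3]; apply Real.sqrt_pos.mpr; positivity
lemma jb3_le (a b c : ℝ) : jb3 a b c ≤ 1 + (|a| + |b| + |c|) := by
  have h0 : 0 ≤ |a| + |b| + |c| := by positivity
  rw [jb3]
  calc Real.sqrt (1 + (|a| + |b| + |c|)^2) ≤ Real.sqrt ((1 + (|a| + |b| + |c|))^2) :=
    Real.sqrt_le_sqrt (by nlinarith)
  _ = 1 + (|a| + |b| + |c|) := Real.sqrt_sq (by linarith)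


set_option maxHeartbeats 1000000 in
/-- The 'basic characterization of non-resonance' (ineq:basicNR) of Lemma
(lem:MainFreqRat): if `t ≥ 1`, `k ≠ 0`, and it is not the case that
(`t ∈ 𝐈_{k,η}` and `t ∈ 𝐈_{k,ξ}` and `|l| < |η|/5` and `|l'| < |ξ|/5`), then
`1/(|k| + |η - kt| + |l|) + 1/(|k| + |ξ - kt| + |l'|) ≤ C ⟨η-ξ, l-l'⟩ / ⟨k, t, l'⟩`. -/
theorem basicNR :
    ∃ C : ℝ, 0 < C ∧
      ∀ (t η ξ : ℝ) (k l l' : ℤ), 1 ≤ t → k ≠ 0 →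
        ¬(t ∈ IcritRes k η ∧ t ∈ IcritRes k ξ ∧
            |(l : ℝ)| < |η| / 5 ∧ |(l' : ℝ)| < |ξ| / 5) →
        1 / (|(k : ℝ)| + |η - (k : ℝ) * t| + |(l : ℝ)|) +
            1 / (|(k : ℝ)| + |ξ - (k : ℝ) * t| + |(l' : ℝ)|) ≤
          C * jb2 (η - ξ) ((l : ℝ) - (l' : ℝ)) / jb3 (k : ℝ) t (l' : ℝ) := by
  refine ⟨72, by norm_num, ?_⟩
  intro t η ξ k l l' ht hk hnr
  have ht0 : 0 < t := lt_of_lt_of_le one_pos ht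
  have hK1 : (1 : ℝ) ≤ |(k : ℝ)| := by
    have : (1:ℤ) ≤ |k| := Int.one_le_abs hk
    calc (1:ℝ) ≤ ((|k| : ℤ) : ℝ) := by exact_mod_cast this
    _ = |(k : ℝ)| := by push_cast; ring
  set D1 : ℝ := |(k : ℝ)| + |η - (k : ℝ) * t| + |(l : ℝ)| with hD1def
  set D2 : ℝ := |(k : ℝ)| + |ξ - (k : ℝ) * t| + |(l' : ℝ)| with hD2def
  set N : ℝ := jb2 (η - ξ) ((l : ℝ) - (l' : ℝ)) with hNdef
  set B : ℝ := jb3 (k : ℝ) t (l' : ℝ) with hBdef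
  have hD1 : 1 ≤ D1 := by
    have := abs_nonneg (η - (k:ℝ)*t); have := abs_nonneg ((l:ℝ)); rw [hD1def]; linarith
  have hD2 : 1 ≤ D2 := by
    have := abs_nonneg (ξ - (k:ℝ)*t); have := abs_nonneg ((l':ℝ)); rw [hD2def]; linarith
  have hN1 : 1 ≤ N := jb2_one_le _ _
  have hNge : |η - ξ| + |(l : ℝ) - (l' : ℝ)| ≤ N := jb2_ge _ _
  have hB0 : 0 < B := jb3_pos _ _ _
  have hBle : B ≤ 1 + (|(k:ℝ)| + |t| + |(l':ℝ)|) := jb3_le _ _ _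
  have hta : |t| = t := abs_of_pos ht0
  rw [hta] at hBle
  -- comparing D1 and D2
  have h12 : |η - (k:ℝ)*t| ≤ |ξ - (k:ℝ)*t| + |η - ξ| := by
    calc |η - (k:ℝ)*t| = |(ξ - (k:ℝ)*t) + (η - ξ)| := by ring_nf
    _ ≤ _ := abs_add_le _ _
  have h21 : |ξ - (k:ℝ)*t| ≤ |η - (k:ℝ)*t| + |η - ξ| := by
    calc |ξ - (k:ℝ)*t| = |(η - (k:ℝ)*t) - (η - ξ)| := by ring_nf
    _ ≤ _ := abs_sub _ _
  have hll : |(l:ℝ)| ≤ |(l':ℝ)| + |(l:ℝ) - (l':ℝ)| := by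
    calc |(l:ℝ)| = |(l':ℝ) + ((l:ℝ) - (l':ℝ))| := by ring_nf
    _ ≤ _ := abs_add_le _ _
  have hll' : |(l':ℝ)| ≤ |(l:ℝ)| + |(l:ℝ) - (l':ℝ)| := by
    calc |(l':ℝ)| = |(l:ℝ) - ((l:ℝ) - (l':ℝ))| := by ring_nf
    _ ≤ _ := abs_sub _ _
  have hD12 : D1 ≤ D2 + N := by rw [hD1def, hD2def]; linarith
  have hD21 : D2 ≤ D1 + N := by rw [hD1def, hD2def]; linarith
  -- the key dichotomy
  have hcase : t ≤ 16 * D1 ∨ t ≤ 16 * D2 := by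
    by_cases h1 : t ∈ IcritRes k η ∧ |(l : ℝ)| < |η| / 5
    · right
      apply key_nr t ξ k l' ht hk
      have h2 : ¬(t ∈ IcritRes k ξ ∧ |(l' : ℝ)| < |ξ| / 5) := fun h2 =>
        hnr ⟨h1.1, h2.1, h1.2, h2.2⟩
      rcases not_and_or.mp h2 with a | b
      · exact Or.inl a
      · exact Or.inr (not_lt.mp b)
    · left
      apply key_nr t η k l ht hk
      rcases not_and_or.mp h1 with a | b
      · exact Or.inl a
      · exact Or.inr (not_lt.mp b)
  have hT1 : t ≤ 16 * D1 + 16 * N := by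
    rcases hcase with h | h
    · linarith
    · linarith
  have hT2 : t ≤ 16 * D2 + 16 * N := by
    rcases hcase with h | h
    · linarith
    · linarith
  have hlD2 : |(l':ℝ)| ≤ D2 := by
    have := abs_nonneg (ξ - (k:ℝ)*t); rw [hD2def]; linarith
  have hlD1 : |(l':ℝ)| ≤ D1 + N := by
    have := abs_nonneg (η - (k:ℝ)*t); have := abs_nonneg (η - ξ); rw [hD1def]; linarith
  have hkD1 : |(k:ℝ)| ≤ D1 := by
    have := abs_nonneg (η - (k:ℝ)*t); have := abs_nonneg ((l:ℝ)); rw [hD1def]; linarith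
  have hkD2 : |(k:ℝ)| ≤ D2 := by
    have := abs_nonneg (ξ - (k:ℝ)*t); have := abs_nonneg ((l':ℝ)); rw [hD2def]; linarith
  have hB1 : B ≤ 36 * D1 * N := by
    nlinarith [mul_nonneg (sub_nonneg.mpr hD1) (sub_nonneg.mpr hN1)]
  have hB2 : B ≤ 36 * D2 * N := by
    nlinarith [mul_nonneg (sub_nonneg.mpr hD2) (sub_nonneg.mpr hN1)]
  have hD1pos : (0:ℝ) < D1 := lt_of_lt_of_le one_pos hD1
  have hD2pos : (0:ℝ) < D2 := lt_of_lt_of_le one_pos hD2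
  have e1 : 1 / D1 ≤ 36 * N / B := by
    rw [div_le_div_iff₀ hD1pos hB0]
    nlinarith
  have e2 : 1 / D2 ≤ 36 * N / B := by
    rw [div_le_div_iff₀ hD2pos hB0]
    nlinarith
  calc 1 / D1 + 1 / D2 ≤ 36 * N / B + 36 * N / B := add_le_add e1 e2
  _ = 72 * N / B := by ring
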